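/- For all integers n ≥ 10 and all p, q ∈ {1,...,9} with p < q, we have P(p,n) > P(q,n), where P(d,n) = (1/n)·Σ_{i=1}^{n} c_d(i)/i and c_d(i) is the number of integers in {1,...,i} with decimal leading digit d. -/

import Mathlib

open Finset

/-- The leading (first) decimal digit of a positive integer. -/
def leadingDigit (n : ℕ) : ℕ := n / 10 ^ (Nat.log 10 n)

/-- The number of integers in {1,...,i} whose decimal leading digit equals d. -/
def ldCount (d i : ℕ) : ℕ := ((Finset.Icc 1 i).filter (fun j => leadingDigit j = d)).card

/-- Probability that the leading digit is d when i is uniform on {1,...,n} and j uniform on {1,...,i}. -/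
noncomputable def P (d n : ℕ) : ℝ := (1 / (n : ℝ)) * ∑ i ∈ Finset.Icc 1 n, (ldCount d i : ℝ) / i

/-
Subtracting `(q - p) * 10 ^ k` from a `(k+1)`-digit number with leading digit `q ≥ p ≥ 1` keeps
the number of digits and yields a smaller number with leading digit `p`; this injection gives
`c_q(i) ≤ c_p(i)` for every `i`. The inequality is strict at `i = p`, where `c_q(p) = 0`, and
`P(d, n)` is a positive combination of the `c_d(i)`.
-/

lemma leadingDigit_of_lt_ten {j : ℕ} (hj : j < 10) : leadingDigit j = j := by
  simp [leadingDigit, Nat.log_of_lt hj]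

lemma mul_pow_log_le_of_le_leadingDigit {j m : ℕ} (hm : m ≤ leadingDigit j) :
    m * 10 ^ Nat.log 10 j ≤ j :=
  (Nat.mul_le_mul_right _ hm).trans (Nat.div_mul_le_self _ _)

lemma log_sub_mul_pow_log {j m : ℕ} (hm : m < leadingDigit j) :
    Nat.log 10 (j - m * 10 ^ Nat.log 10 j) = Nat.log 10 j := by
  have hT : 10 ^ Nat.log 10 j ≤ j - m * 10 ^ Nat.log 10 j := by
    have := mul_pow_log_le_of_le_leadingDigit hm
    rw [Nat.succ_mul] at this
    omega
  apply Nat.log_eq_of_pow_le_of_lt_pow hT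
  exact (Nat.sub_le _ _).trans_lt (Nat.lt_pow_succ_log_self (by norm_num) j)

lemma leadingDigit_sub_mul_pow_log {j m : ℕ} (hm : m < leadingDigit j) :
    leadingDigit (j - m * 10 ^ Nat.log 10 j) = leadingDigit j - m := by
  rw [leadingDigit, log_sub_mul_pow_log hm, mul_comm, Nat.sub_mul_div, leadingDigit]

lemma ldCount_le_ldCount {p q : ℕ} (hp : 1 ≤ p) (hpq : p ≤ q) (i : ℕ) :
    ldCount q i ≤ ldCount p i := by
  have hshift : ∀ j, leadingDigit j = q → q - p < leadingDigit j := fun j hj => by omega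
  refine card_le_card_of_injOn (fun j => j - (q - p) * 10 ^ Nat.log 10 j) ?_ ?_
  · intro j hj
    simp only [coe_filter, mem_Icc, Set.mem_ofPred_eq] at hj ⊢
    obtain ⟨⟨-, hji⟩, hjq⟩ := hj
    have hld : leadingDigit (j - (q - p) * 10 ^ Nat.log 10 j) = p := by
      rw [leadingDigit_sub_mul_pow_log (hshift j hjq)]
      omega
    refine ⟨⟨Nat.one_le_iff_ne_zero.2 fun h0 => ?_, (Nat.sub_le _ _).trans hji⟩, hld⟩
    rw [h0] at hld
    rw [leadingDigit, Nat.zero_div] at hld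
    omega
  · intro j₁ hj₁ j₂ hj₂ heq
    simp only [coe_filter, mem_Icc, Set.mem_ofPred_eq] at hj₁ hj₂ heq
    have hlog : Nat.log 10 j₁ = Nat.log 10 j₂ := by
      rw [← log_sub_mul_pow_log (hshift j₁ hj₁.2), ← log_sub_mul_pow_log (hshift j₂ hj₂.2), heq]
    have h₁ := mul_pow_log_le_of_le_leadingDigit (hshift j₁ hj₁.2).le
    have h₂ := mul_pow_log_le_of_le_leadingDigit (hshift j₂ hj₂.2).le
    rw [hlog] at heq h₁
    omega

lemma ldCount_eq_zero_of_lt {d i : ℕ} (hid : i < d) (hi : i < 10) : ldCount d i = 0 := by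
  rw [ldCount, card_eq_zero, filter_eq_empty_iff]
  intro j hj
  rw [mem_Icc] at hj
  rw [leadingDigit_of_lt_ten (by omega)]
  omega

lemma ldCount_pos {d i : ℕ} (hd : 1 ≤ d) (hd10 : d < 10) (hdi : d ≤ i) : 0 < ldCount d i :=
  card_pos.2 ⟨d, mem_filter.2 ⟨mem_Icc.2 ⟨hd, hdi⟩, leadingDigit_of_lt_ten hd10⟩⟩

lemma P_lt_P_of_ldCount_le {d e n : ℕ} (hle : ∀ i, ldCount d i ≤ ldCount e i)
    {i : ℕ} (hi : i ∈ Icc 1 n) (hlt : ldCount d i < ldCount e i) : P d n < P e n := by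
  have hn : (0 : ℝ) < n := by
    rw [mem_Icc] at hi
    exact_mod_cast hi.1.trans hi.2
  refine mul_lt_mul_of_pos_left (sum_lt_sum (fun k _ => ?_) ⟨i, hi, ?_⟩) (by positivity)
  · gcongr
    exact_mod_cast hle k
  · have : (0 : ℝ) < i := by
      rw [mem_Icc] at hi
      exact_mod_cast hi.1
    gcongr

theorem P_strict_anti (n p q : ℕ) (hn : 10 ≤ n) (hp : p ∈ Finset.Icc 1 9)
    (hpq : p < q) : P p n > P q n := by
  rw [Finset.mem_Icc] at hp
  have hcount_strict : ldCount q p < ldCount p p :=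
    (ldCount_eq_zero_of_lt hpq (by omega)).trans_lt (ldCount_pos hp.1 (by omega) le_rfl)
  exact P_lt_P_of_ldCount_le (ldCount_le_ldCount hp.1 hpq.le) (mem_Icc.2 ⟨hp.1, by omega⟩)
    hcount_strict
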